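/- Feasibility rate of deterministic R-OpEx for monotone nonsmooth BVI: There is an absolute constant C > 0 such that the following holds. Let X ⊆ ℝ^n be nonempty compact convex with diameter D_X > 0, let F, H : ℝ^n → ℝ^n be monotone on X with ‖F(x₁) − F(x₂)‖ ≤ L_F‖x₁ − x₂‖ + M_F and ‖H(x₁) − H(x₂)‖ ≤ L_H‖x₁ − x₂‖ + M_H for all x₁, x₂ ∈ X, suppose ‖H(x)‖ ≤ C_H for all x ∈ X, and suppose the solution set X_F^* of VI(F, X) is nonempty. Fix an integer K ≥ 2, set η := K^{−1/4} and γ := D_X/(8D_X(L_F + ηL_H) + √(K(M_F² + η²M_H²))) (assume the denominator is positive), and run deterministic R-OpEx with τ_k = θ_k = 1, η_k = η, γ_k = γ for all k, producing x̄_K := (1/(K−1))·Σ_{k=1}^{K−1} x_{k+1}. Then Gap(x̄_K, F, X) := sup_{x ∈ X} ⟨F(x), x̄_K − x⟩ ≤ C·D_X·(D_X L_F/K + D_X L_H/K^{5/4} + M_F/K^{1/2} + M_H/K^{3/4} + C_H/K^{1/4}). -/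

import Mathlib

/-!
Write `G k = F (x k) + η • H (x k)`. An R-OpEx step is a proximal step for the extrapolated
value `2 G k - G (k - 1)`, so its first-order optimality condition is a three-point inequality.
Carrying the extrapolation error `⟪G k - G (k - 1), x k - z⟫` and the last step length along with
`‖z - x k‖² / (2 γ)` gives a potential that, once `4 γ (L_F + η L_H) ≤ 1`, drops by at least
`⟪G (k + 1), x (k + 1) - z⟫ - 2 γ (M_F + η M_H)²` per step. Summing and averaging, and using
monotonicity of `F` (the `η H` part costs at most `η C_H diam X`), bounds `⟪F z, x̄ - z⟫` for every
`z ∈ X`; the choice of `η` and `γ` turns this bound into the stated rate.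
-/

open RealInnerProductSpace

/-- The gap function `Gap(x̃, G, S) = sup_{y ∈ S} ⟪G y, x̃ − y⟫`, valued in the
extended reals. -/
noncomputable def Gap {n : ℕ} (G : EuclideanSpace ℝ (Fin n) → EuclideanSpace ℝ (Fin n))
    (S : Set (EuclideanSpace ℝ (Fin n))) (xt : EuclideanSpace ℝ (Fin n)) : EReal :=
  ⨆ y ∈ S, ((⟪G y, xt - y⟫ : ℝ) : EReal)

/-- The solution set `X_F^*` of the variational inequality `VI(F, X)`. -/
def VISol {n : ℕ} (F : EuclideanSpace ℝ (Fin n) → EuclideanSpace ℝ (Fin n))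
    (X : Set (EuclideanSpace ℝ (Fin n))) : Set (EuclideanSpace ℝ (Fin n)) :=
  {x | x ∈ X ∧ ∀ y ∈ X, 0 ≤ ⟪F x, y - x⟫}

section Prox

variable {E : Type*} [NormedAddCommGroup E] [InnerProductSpace ℝ E]

theorem IsMinOn.inner_sub_le_of_prox {X : Set E} (hX : Convex ℝ X) {v x₀ y z : E} {c : ℝ}
    (hmin : IsMinOn (fun w ↦ ⟪v, w⟫ + c * ‖w - x₀‖ ^ 2) X y) (hy : y ∈ X) (hz : z ∈ X) :
    ⟪v, y - z⟫ ≤ c * (‖z - x₀‖ ^ 2 - ‖z - y‖ ^ 2 - ‖y - x₀‖ ^ 2) := by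
  have hderiv : HasFDerivAt (fun w ↦ ⟪v, w⟫ + c * ‖w - x₀‖ ^ 2)
      (innerSL ℝ v + c • (2 • (innerSL ℝ (y - x₀)).comp (ContinuousLinearMap.id ℝ E))) y :=
    (innerSL ℝ v).hasFDerivAt.add (((hasFDerivAt_id y).sub_const x₀).norm_sq.const_mul c)
  have hfirst : 0 ≤ ⟪v, z - y⟫ + c * (2 * ⟪y - x₀, z - y⟫) := by
    simpa [inner_sub_left] using
      hmin.localize.hasFDerivWithinAt_nonneg hderiv.hasFDerivWithinAt
        (sub_mem_posTangentConeAt_of_segment_subset (hX.segment_subset hy hz))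
  have hsplit : ‖z - x₀‖ ^ 2 = ‖z - y‖ ^ 2 + 2 * ⟪y - x₀, z - y⟫ + ‖y - x₀‖ ^ 2 := by
    rw [← sub_add_sub_cancel z y x₀, norm_add_sq_real, real_inner_comm]
  rw [hsplit, ← neg_sub z y, inner_neg_right]
  linarith

end Prox

namespace OperatorExtrapolation

variable {E : Type*} [NormedAddCommGroup E] [InnerProductSpace ℝ E]

noncomputable def potential (c : ℝ) (x G : ℕ → E) (z : E) (k : ℕ) : ℝ :=
  c * ‖z - x k‖ ^ 2 - ⟪G k - G (k - 1), x k - z⟫ + c / 2 * ‖x k - x (k - 1)‖ ^ 2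

variable {c L M : ℝ} {x G : ℕ → E} {z : E}

theorem inner_le_potential_sub {k : ℕ} (hc : 0 < c) (hL : 0 ≤ L) (hLc : 2 * L ≤ c)
    (hG : ‖G k - G (k - 1)‖ ≤ L * ‖x k - x (k - 1)‖ + M)
    (hprox : ⟪G k + (G k - G (k - 1)), x (k + 1) - z⟫ ≤
      c * (‖z - x k‖ ^ 2 - ‖z - x (k + 1)‖ ^ 2 - ‖x (k + 1) - x k‖ ^ 2)) :
    ⟪G (k + 1), x (k + 1) - z⟫ ≤
      potential c x G z k - potential c x G z (k + 1) + M ^ 2 / c := by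
  set a := ‖x k - x (k - 1)‖
  set b := ‖x (k + 1) - x k‖
  have hsplit : ⟪G (k + 1), x (k + 1) - z⟫ = ⟪G k + (G k - G (k - 1)), x (k + 1) - z⟫
      + ⟪G (k + 1) - G k, x (k + 1) - z⟫ - ⟪G k - G (k - 1), x k - z⟫
      - ⟪G k - G (k - 1), x (k + 1) - x k⟫ := by
    simp only [inner_add_left, inner_sub_left, inner_sub_right]
    ring
  have hcross : -⟪G k - G (k - 1), x (k + 1) - x k⟫ ≤ (L * a + M) * b := by
    rw [← inner_neg_left]
    exact (real_inner_le_norm _ _).trans (by rw [norm_neg]; gcongr)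
  have hyoung : (L * a + M) * b ≤ L / 2 * (a ^ 2 + b ^ 2) + M ^ 2 / c + c / 4 * b ^ 2 := by
    have hM : M * b ≤ M ^ 2 / c + c / 4 * b ^ 2 := by
      rw [div_add' _ _ _ hc.ne', le_div_iff₀ hc]
      nlinarith [sq_nonneg (M - c / 2 * b)]
    nlinarith [mul_nonneg hL (sq_nonneg (a - b))]
  have hpot : potential c x G z k - potential c x G z (k + 1) =
      c * ‖z - x k‖ ^ 2 - c * ‖z - x (k + 1)‖ ^ 2 - ⟪G k - G (k - 1), x k - z⟫
      + ⟪G (k + 1) - G k, x (k + 1) - z⟫ + c / 2 * a ^ 2 - c / 2 * b ^ 2 := by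
    simp only [potential, Nat.add_sub_cancel]
    ring
  rw [hpot, hsplit]
  nlinarith [sq_nonneg a, sq_nonneg b]

theorem potential_one (hx : x 0 = x 1) (hG : G 0 = G 1) :
    potential c x G z 1 = c * ‖z - x 1‖ ^ 2 := by
  simp [potential, hx, hG]

theorem neg_potential_le {k : ℕ} {R : ℝ} (hc : 0 < c) (hR : ‖x k - z‖ ≤ R)
    (hG : ‖G k - G (k - 1)‖ ≤ L * ‖x k - x (k - 1)‖ + M) :
    -potential c x G z k ≤ L ^ 2 * R ^ 2 / (2 * c) + M * R := by
  set b := ‖x k - x (k - 1)‖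
  have hR0 : 0 ≤ R := (norm_nonneg _).trans hR
  have hinner : ⟪G k - G (k - 1), x k - z⟫ ≤ (L * b + M) * R :=
    (real_inner_le_norm _ _).trans (mul_le_mul hG hR (norm_nonneg _) ((norm_nonneg _).trans hG))
  have hyoung : L * b * R ≤ L ^ 2 * R ^ 2 / (2 * c) + c / 2 * b ^ 2 := by
    rw [div_add' _ _ _ (by positivity), le_div_iff₀ (by positivity)]
    nlinarith [sq_nonneg (L * R - c * b)]
  simp only [potential]
  nlinarith [sq_nonneg ‖z - x k‖]

theorem sum_inner_le (N : ℕ) {R : ℝ} (hc : 0 < c) (hL : 0 ≤ L) (hLc : 2 * L ≤ c)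
    (hx : x 0 = x 1) (hG₀ : G 0 = G 1)
    (hG : ∀ k ∈ Finset.Icc 1 (N + 1), ‖G k - G (k - 1)‖ ≤ L * ‖x k - x (k - 1)‖ + M)
    (hprox : ∀ k ∈ Finset.Icc 1 N, ⟪G k + (G k - G (k - 1)), x (k + 1) - z⟫ ≤
      c * (‖z - x k‖ ^ 2 - ‖z - x (k + 1)‖ ^ 2 - ‖x (k + 1) - x k‖ ^ 2))
    (hR₁ : ‖z - x 1‖ ≤ R) (hR : ‖x (N + 1) - z‖ ≤ R) :
    ∑ k ∈ Finset.Icc 1 N, ⟪G (k + 1), x (k + 1) - z⟫ ≤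
      c * R ^ 2 + L ^ 2 * R ^ 2 / (2 * c) + M * R + N * (M ^ 2 / c) := by
  have hstep : ∀ k ∈ Finset.Icc 1 N, ⟪G (k + 1), x (k + 1) - z⟫ ≤
      potential c x G z k - potential c x G z (k + 1) + M ^ 2 / c := fun k hk ↦
    inner_le_potential_sub hc hL hLc
      (hG k (Finset.Icc_subset_Icc_right N.le_succ hk)) (hprox k hk)
  have htele : ∑ k ∈ Finset.Icc 1 N, (potential c x G z k - potential c x G z (k + 1)) =
      potential c x G z 1 - potential c x G z (N + 1) := by
    rw [← Finset.Ico_add_one_right_eq_Icc, Finset.sum_Ico_eq_sum_range]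
    simpa [add_comm, add_left_comm] using
      Finset.sum_range_sub' (fun i ↦ potential c x G z (1 + i)) N
  have hfirst : potential c x G z 1 ≤ c * R ^ 2 := by
    rw [potential_one hx hG₀]
    gcongr
  have hlast := neg_potential_le hc hR (hG (N + 1) (by simp))
  calc ∑ k ∈ Finset.Icc 1 N, ⟪G (k + 1), x (k + 1) - z⟫
      ≤ ∑ k ∈ Finset.Icc 1 N, (potential c x G z k - potential c x G z (k + 1) + M ^ 2 / c) :=
        Finset.sum_le_sum hstep
    _ = potential c x G z 1 - potential c x G z (N + 1) + N * (M ^ 2 / c) := by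
        rw [Finset.sum_add_distrib, htele, Finset.sum_const, Nat.card_Icc, nsmul_eq_mul]
        simp
    _ ≤ _ := by linarith

end OperatorExtrapolation

section ROpEx

variable {E : Type*} [NormedAddCommGroup E] [InnerProductSpace ℝ E]
  {X : Set E} {F H : E → E} {LF MF LH MH η γ : ℝ} {N : ℕ} {x : ℕ → E}

structure IsROpExTrajectory (F H : E → E) (X : Set E) (η γ : ℝ) (N : ℕ) (x : ℕ → E) : Prop where
  zero_eq_one : x 0 = x 1
  one_mem : x 1 ∈ X
  succ_mem : ∀ k, 1 ≤ k → k ≤ N → x (k + 1) ∈ X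
  isMinOn : ∀ k, 1 ≤ k → k ≤ N → IsMinOn (fun w ↦
    ⟪F (x k) + η • H (x k) + (F (x k) + η • H (x k) - F (x (k - 1)) - η • H (x (k - 1))), w⟫
      + 1 / (2 * γ) * ‖w - x k‖ ^ 2) X (x (k + 1))

theorem IsROpExTrajectory.mem (hx : IsROpExTrajectory F H X η γ N x) {k : ℕ} (hk : k ≤ N + 1) :
    x k ∈ X := by
  rcases k with _ | _ | k
  · exact hx.zero_eq_one ▸ hx.one_mem
  · exact hx.one_mem
  · exact hx.succ_mem (k + 1) (by omega) (by omega)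

theorem norm_add_smul_sub_add_smul_le (hη : 0 ≤ η)
    (hF : ∀ a ∈ X, ∀ b ∈ X, ‖F a - F b‖ ≤ LF * ‖a - b‖ + MF)
    (hH : ∀ a ∈ X, ∀ b ∈ X, ‖H a - H b‖ ≤ LH * ‖a - b‖ + MH) {a b : E} (ha : a ∈ X)
    (hb : b ∈ X) :
    ‖F a + η • H a - (F b + η • H b)‖ ≤ (LF + η * LH) * ‖a - b‖ + (MF + η * MH) :=
  calc ‖F a + η • H a - (F b + η • H b)‖ = ‖(F a - F b) + η • (H a - H b)‖ := by
        rw [smul_sub]; abel_nf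
    _ ≤ ‖F a - F b‖ + η * ‖H a - H b‖ :=
        (norm_add_le _ _).trans_eq (by rw [norm_smul, Real.norm_of_nonneg hη])
    _ ≤ (LF * ‖a - b‖ + MF) + η * (LH * ‖a - b‖ + MH) := by
        gcongr
        exacts [hF a ha b hb, hH a ha b hb]
    _ = (LF + η * LH) * ‖a - b‖ + (MF + η * MH) := by ring

theorem IsROpExTrajectory.sum_inner_le (hx : IsROpExTrajectory F H X η γ N x)
    (hX : Convex ℝ X) (hXb : Bornology.IsBounded X) (hLF : 0 ≤ LF) (hLH : 0 ≤ LH) (hη : 0 ≤ η)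
    (hγ : 0 < γ) (hγL : 4 * γ * (LF + η * LH) ≤ 1)
    (hF : ∀ a ∈ X, ∀ b ∈ X, ‖F a - F b‖ ≤ LF * ‖a - b‖ + MF)
    (hH : ∀ a ∈ X, ∀ b ∈ X, ‖H a - H b‖ ≤ LH * ‖a - b‖ + MH) {z : E} (hz : z ∈ X) :
    ∑ k ∈ Finset.Icc 1 N, ⟪F (x (k + 1)) + η • H (x (k + 1)), x (k + 1) - z⟫ ≤
      Metric.diam X ^ 2 / (2 * γ) + γ * (LF + η * LH) ^ 2 * Metric.diam X ^ 2
        + (MF + η * MH) * Metric.diam X + N * (2 * γ * (MF + η * MH) ^ 2) := by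
  set G : ℕ → E := fun k ↦ F (x k) + η • H (x k) with hG
  have hdiam : ∀ a ∈ X, ∀ b ∈ X, ‖a - b‖ ≤ Metric.diam X := fun a ha b hb ↦
    dist_eq_norm a b ▸ Metric.dist_le_diam_of_mem hXb ha hb
  have hGlip : ∀ k ∈ Finset.Icc 1 (N + 1),
      ‖G k - G (k - 1)‖ ≤ (LF + η * LH) * ‖x k - x (k - 1)‖ + (MF + η * MH) := by
    intro k hk
    have hkN := (Finset.mem_Icc.1 hk).2
    exact norm_add_smul_sub_add_smul_le hη hF hH (hx.mem hkN) (hx.mem (by omega))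
  have hprox : ∀ k ∈ Finset.Icc 1 N, ⟪G k + (G k - G (k - 1)), x (k + 1) - z⟫ ≤
      1 / (2 * γ) * (‖z - x k‖ ^ 2 - ‖z - x (k + 1)‖ ^ 2 - ‖x (k + 1) - x k‖ ^ 2) := by
    intro k hk
    obtain ⟨hk₁, hkN⟩ := Finset.mem_Icc.1 hk
    simpa only [hG, sub_add_eq_sub_sub] using
      (hx.isMinOn k hk₁ hkN).inner_sub_le_of_prox hX (hx.succ_mem k hk₁ hkN) hz
  have hsum := OperatorExtrapolation.sum_inner_le N (by positivity) (by positivity)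
    (by rw [le_div_iff₀ (by positivity)]; linarith) (by simp [hx.zero_eq_one])
    (by simp [hG, hx.zero_eq_one]) hGlip hprox (hdiam z hz (x 1) hx.one_mem)
    (hdiam _ (hx.mem le_rfl) z hz)
  refine hsum.trans_eq ?_
  field_simp

theorem inner_sub_le_inner_add_smul {CH : ℝ} (hη : 0 ≤ η)
    (hmono : ∀ a ∈ X, ∀ b ∈ X, 0 ≤ ⟪F a - F b, a - b⟫) {y z : E} (hy : y ∈ X) (hz : z ∈ X)
    (hHy : ‖H y‖ ≤ CH) :
    ⟪F z, y - z⟫ ≤ ⟪F y + η • H y, y - z⟫ + η * (CH * ‖y - z‖) := by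
  have hmono' := hmono y hy z hz
  have hH : -(CH * ‖y - z‖) ≤ ⟪H y, y - z⟫ :=
    neg_le_of_abs_le ((abs_real_inner_le_norm _ _).trans (by gcongr))
  rw [inner_sub_left] at hmono'
  rw [inner_add_left, real_inner_smul_left]
  nlinarith [mul_le_mul_of_nonneg_left hH hη]

theorem inner_inv_card_smul_sum_sub {ι : Type*} {s : Finset ι} (hs : s.Nonempty) (v z : E)
    (y : ι → E) :
    ⟪v, (s.card : ℝ)⁻¹ • ∑ i ∈ s, y i - z⟫ = (s.card : ℝ)⁻¹ * ∑ i ∈ s, ⟪v, y i - z⟫ := by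
  have hcard : (s.card : ℝ) ≠ 0 := by exact_mod_cast hs.card_pos.ne'
  have havg : (s.card : ℝ)⁻¹ • ∑ i ∈ s, y i - z = (s.card : ℝ)⁻¹ • ∑ i ∈ s, (y i - z) := by
    rw [Finset.sum_sub_distrib, Finset.sum_const, smul_sub, ← Nat.cast_smul_eq_nsmul ℝ,
      smul_smul, inv_mul_cancel₀ hcard, one_smul]
  rw [havg, real_inner_smul_right, inner_sum]

theorem IsROpExTrajectory.inner_average_sub_le {CH : ℝ} (hx : IsROpExTrajectory F H X η γ N x)
    (hN : 1 ≤ N) (hX : Convex ℝ X) (hXb : Bornology.IsBounded X) (hLF : 0 ≤ LF) (hLH : 0 ≤ LH)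
    (hη : 0 ≤ η) (hγ : 0 < γ) (hγL : 4 * γ * (LF + η * LH) ≤ 1)
    (hmono : ∀ a ∈ X, ∀ b ∈ X, 0 ≤ ⟪F a - F b, a - b⟫)
    (hF : ∀ a ∈ X, ∀ b ∈ X, ‖F a - F b‖ ≤ LF * ‖a - b‖ + MF)
    (hH : ∀ a ∈ X, ∀ b ∈ X, ‖H a - H b‖ ≤ LH * ‖a - b‖ + MH) (hHb : ∀ a ∈ X, ‖H a‖ ≤ CH)
    {z : E} (hz : z ∈ X) :
    ⟪F z, (N : ℝ)⁻¹ • ∑ k ∈ Finset.Icc 1 N, x (k + 1) - z⟫ ≤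
      (N : ℝ)⁻¹ * (Metric.diam X ^ 2 / (2 * γ) + γ * (LF + η * LH) ^ 2 * Metric.diam X ^ 2
        + (MF + η * MH) * Metric.diam X + 2 * γ * N * (MF + η * MH) ^ 2)
      + η * (CH * Metric.diam X) := by
  have hgap : ∀ k ∈ Finset.Icc 1 N, ⟪F z, x (k + 1) - z⟫ ≤
      ⟪F (x (k + 1)) + η • H (x (k + 1)), x (k + 1) - z⟫ + η * (CH * Metric.diam X) := by
    intro k hk
    obtain ⟨hk₁, hkN⟩ := Finset.mem_Icc.1 hk
    have hxk := hx.succ_mem k hk₁ hkN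
    refine (inner_sub_le_inner_add_smul hη hmono hxk hz (hHb _ hxk)).trans ?_
    gcongr
    · exact (norm_nonneg _).trans (hHb _ hxk)
    · exact dist_eq_norm (x (k + 1)) z ▸ Metric.dist_le_diam_of_mem hXb hxk hz
  have hcard : ((Finset.Icc 1 N).card : ℝ) = N := by simp
  have hN0 : (N : ℝ) ≠ 0 := by positivity
  calc ⟪F z, (N : ℝ)⁻¹ • ∑ k ∈ Finset.Icc 1 N, x (k + 1) - z⟫
      = (N : ℝ)⁻¹ * ∑ k ∈ Finset.Icc 1 N, ⟪F z, x (k + 1) - z⟫ := by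
        rw [← hcard, inner_inv_card_smul_sum_sub (Finset.nonempty_Icc.2 hN)]
    _ ≤ (N : ℝ)⁻¹ * (∑ k ∈ Finset.Icc 1 N, ⟪F (x (k + 1)) + η • H (x (k + 1)), x (k + 1) - z⟫
          + N * (η * (CH * Metric.diam X))) := by
        gcongr
        refine (Finset.sum_le_sum hgap).trans_eq ?_
        rw [Finset.sum_add_distrib, Finset.sum_const, nsmul_eq_mul, hcard]
    _ ≤ (N : ℝ)⁻¹ * (Metric.diam X ^ 2 / (2 * γ) + γ * (LF + η * LH) ^ 2 * Metric.diam X ^ 2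
          + (MF + η * MH) * Metric.diam X + N * (2 * γ * (MF + η * MH) ^ 2)
          + N * (η * (CH * Metric.diam X))) := by
        gcongr
        exact hx.sum_inner_le hX hXb hLF hLH hη hγ hγL hF hH hz
    _ = _ := by field_simp

end ROpEx

section Rate

theorem ergodic_bound_le_of_stepsize {D L M B γ N : ℝ} (hD : 0 ≤ D) (hL : 0 ≤ L) (hB : 0 ≤ B)
    (hγ : 0 < γ) (hγD : γ * (8 * D * L + B) = D) (hNM : N * M ^ 2 ≤ 2 * B ^ 2) :
    (2 * D) ^ 2 / (2 * γ) + γ * L ^ 2 * (2 * D) ^ 2 + M * (2 * D) + 2 * γ * N * M ^ 2 ≤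
      17 * D ^ 2 * L + 6 * D * B + 2 * D * M := by
  have hfirst : (2 * D) ^ 2 / (2 * γ) = 2 * D * (8 * D * L + B) := by
    rw [div_eq_iff (by positivity)]
    linear_combination (-4 * D) * hγD
  have hγL : 8 * γ * D * L ≤ D := by nlinarith [mul_nonneg hγ.le hB]
  have hγB : γ * B ≤ D := by nlinarith [mul_nonneg hγ.le (mul_nonneg hD hL)]
  have hsecond : γ * L ^ 2 * (2 * D) ^ 2 ≤ D ^ 2 * L / 2 := by
    nlinarith [mul_le_mul_of_nonneg_left hγL (mul_nonneg hD hL)]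
  have hlast : 2 * γ * N * M ^ 2 ≤ 4 * D * B := by
    nlinarith [mul_le_mul_of_nonneg_left hNM hγ.le, mul_le_mul_of_nonneg_left hγB hB]
  nlinarith [mul_nonneg (sq_nonneg D) hL]

theorem sqrt_mul_sq_add_sq_le {K a b : ℝ} (hK : 0 ≤ K) (ha : 0 ≤ a) (hb : 0 ≤ b) :
    √(K * (a ^ 2 + b ^ 2)) ≤ √K * (a + b) := by
  rw [← Real.sqrt_sq (add_nonneg ha hb), ← Real.sqrt_mul hK]
  gcongr
  nlinarith [mul_nonneg ha hb]

theorem inv_rpow_natCast_div_four {K : ℝ} (hK : 0 ≤ K) (r : ℕ) :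
    (K ^ ((r : ℝ) / 4))⁻¹ = (K ^ (-(1 / 4 : ℝ))) ^ r := by
  rw [← Real.rpow_natCast, ← Real.rpow_mul hK, ← Real.rpow_neg hK]
  ring_nf

theorem ergodic_bound_le_rate {K η γ D LF MF LH MH CH : ℝ} (hK : 2 ≤ K)
    (hη : η = K ^ (-(1 / 4 : ℝ))) (hD : 0 < D) (hLF : 0 ≤ LF) (hMF : 0 ≤ MF) (hLH : 0 ≤ LH)
    (hMH : 0 ≤ MH) (hCH : 0 ≤ CH) (hγ : 0 < γ)
    (hγD : γ * (8 * D * (LF + η * LH) + √(K * (MF ^ 2 + η ^ 2 * MH ^ 2))) = D) :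
    (K - 1)⁻¹ * ((2 * D) ^ 2 / (2 * γ) + γ * (LF + η * LH) ^ 2 * (2 * D) ^ 2
        + (MF + η * MH) * (2 * D) + 2 * γ * (K - 1) * (MF + η * MH) ^ 2)
      + η * (CH * (2 * D)) ≤
      34 * D * (D * LF / K + D * LH / K ^ ((5 : ℝ) / 4) + MF / K ^ ((1 : ℝ) / 2)
        + MH / K ^ ((3 : ℝ) / 4) + CH / K ^ ((1 : ℝ) / 4)) := by
  have hK0 : 0 < K := by linarith
  have hη0 : 0 < η := hη ▸ Real.rpow_pos_of_pos hK0 _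
  have hη1 : η ≤ 1 := hη ▸ Real.rpow_le_one_of_one_le_of_nonpos (by linarith) (by norm_num)
  have hpow := hη ▸ inv_rpow_natCast_div_four hK0.le
  have e1 : (K ^ ((1 : ℝ) / 4))⁻¹ = η := by simpa using hpow 1
  have e2 : (K ^ ((1 : ℝ) / 2))⁻¹ = η ^ 2 := by
    rw [show (1 : ℝ) / 2 = (2 : ℕ) / 4 by norm_num]
    exact hpow 2
  have e3 : (K ^ ((3 : ℝ) / 4))⁻¹ = η ^ 3 := by simpa using hpow 3
  have e4 : K⁻¹ = η ^ 4 := by simpa using hpow 4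
  have e5 : (K ^ ((5 : ℝ) / 4))⁻¹ = η ^ 5 := by simpa using hpow 5
  set B := √(K * (MF ^ 2 + η ^ 2 * MH ^ 2)) with hB
  have hNM : (K - 1) * (MF + η * MH) ^ 2 ≤ 2 * B ^ 2 := by
    rw [hB, Real.sq_sqrt (by positivity), mul_left_comm, ← mul_pow]
    nlinarith [add_sq_le (a := MF) (b := η * MH), sq_nonneg (MF + η * MH)]
  have hηB : η ^ 2 * B ≤ MF + η * MH := by
    have hsqrt : η ^ 2 * √K = 1 := by
      rw [Real.sqrt_eq_rpow, ← e2, inv_mul_cancel₀ (by positivity)]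
    calc η ^ 2 * B ≤ η ^ 2 * (√K * (MF + η * MH)) := by
          rw [hB, ← mul_pow]
          gcongr
          exact sqrt_mul_sq_add_sq_le hK0.le hMF (by positivity)
      _ = MF + η * MH := by rw [← mul_assoc, hsqrt, one_mul]
  have hKinv : (K - 1)⁻¹ ≤ 2 * η ^ 4 := by
    rw [← e4, ← inv_inv 2, ← mul_inv]
    exact inv_anti₀ (by positivity) (by linarith)
  calc (K - 1)⁻¹ * ((2 * D) ^ 2 / (2 * γ) + γ * (LF + η * LH) ^ 2 * (2 * D) ^ 2
          + (MF + η * MH) * (2 * D) + 2 * γ * (K - 1) * (MF + η * MH) ^ 2) + η * (CH * (2 * D))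
      ≤ 2 * η ^ 4 * (17 * D ^ 2 * (LF + η * LH) + 6 * D * B + 2 * D * (MF + η * MH))
          + η * (CH * (2 * D)) := by
        gcongr ?_ + _
        refine (mul_le_mul_of_nonneg_left (ergodic_bound_le_of_stepsize hD.le (by positivity)
          (Real.sqrt_nonneg _) hγ hγD hNM) (inv_nonneg.2 (by linarith))).trans ?_
        gcongr
    _ ≤ 34 * D * (D * LF * η ^ 4 + D * LH * η ^ 5 + MF * η ^ 2 + MH * η ^ 3 + CH * η) := by
        have hη42 : η ^ 4 ≤ η ^ 2 := pow_le_pow_of_le_one hη0.le hη1 (by norm_num)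
        have hη53 : η ^ 5 ≤ η ^ 3 := pow_le_pow_of_le_one hη0.le hη1 (by norm_num)
        linarith [mul_le_mul_of_nonneg_left hηB (by positivity : 0 ≤ 12 * D * η ^ 2),
          mul_le_mul_of_nonneg_left hη42 (by positivity : 0 ≤ 4 * D * MF),
          mul_le_mul_of_nonneg_left hη53 (by positivity : 0 ≤ 4 * D * MH),
          (by positivity : 0 ≤ D * MF * η ^ 2), (by positivity : 0 ≤ D * MH * η ^ 3),
          (by positivity : 0 ≤ D * CH * η)]
    _ = _ := by
        rw [div_eq_mul_inv (D * LF), div_eq_mul_inv (D * LH), div_eq_mul_inv MF,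
          div_eq_mul_inv MH, div_eq_mul_inv CH, e1, e2, e3, e4, e5]

end Rate

/-- **Feasibility rate of deterministic R-OpEx for monotone nonsmooth BVI.**
With constant parameters `τ_k = θ_k = 1`, `η = K^{-1/4}`,
`γ = D_X / (8 D_X (L_F + η L_H) + √(K (M_F² + η² M_H²)))`, the averaged iterate
`x̄_K` satisfies
`Gap(x̄_K, F, X) ≤ C·D_X·(D_X L_F/K + D_X L_H/K^{5/4} + M_F/K^{1/2} + M_H/K^{3/4} + C_H/K^{1/4})`. -/
theorem ropex_feasibility_rate_monotone :
    ∃ C : ℝ, 0 < C ∧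
      ∀ (n : ℕ) (X : Set (EuclideanSpace ℝ (Fin n)))
        (F H : EuclideanSpace ℝ (Fin n) → EuclideanSpace ℝ (Fin n))
        (LF MF LH MH CH DX : ℝ) (K : ℕ) (η γ : ℝ)
        (x : ℕ → EuclideanSpace ℝ (Fin n)),
        X.Nonempty → IsCompact X → Convex ℝ X →
        DX = Metric.diam X / 2 → 0 < DX →
        0 ≤ LF → 0 ≤ MF → 0 ≤ LH → 0 ≤ MH →
        (∀ a ∈ X, ∀ b ∈ X, 0 ≤ ⟪F a - F b, a - b⟫) →
        (∀ a ∈ X, ∀ b ∈ X, 0 ≤ ⟪H a - H b, a - b⟫) →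
        (∀ a ∈ X, ∀ b ∈ X, ‖F a - F b‖ ≤ LF * ‖a - b‖ + MF) →
        (∀ a ∈ X, ∀ b ∈ X, ‖H a - H b‖ ≤ LH * ‖a - b‖ + MH) →
        (∀ a ∈ X, ‖H a‖ ≤ CH) →
        (VISol F X).Nonempty →
        2 ≤ K →
        η = (K : ℝ) ^ (-(1 / 4 : ℝ)) →
        0 < 8 * DX * (LF + η * LH) + Real.sqrt (K * (MF ^ 2 + η ^ 2 * MH ^ 2)) →
        γ = DX / (8 * DX * (LF + η * LH) + Real.sqrt (K * (MF ^ 2 + η ^ 2 * MH ^ 2))) →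
        x 0 = x 1 → x 1 ∈ X →
        (∀ k, 1 ≤ k → k ≤ K - 1 → x (k + 1) ∈ X) →
        (∀ k, 1 ≤ k → k ≤ K - 1 → ∀ z ∈ X,
          ⟪F (x k) + η • H (x k)
              + (F (x k) + η • H (x k) - F (x (k - 1)) - η • H (x (k - 1))), x (k + 1)⟫
              + 1 / (2 * γ) * ‖x (k + 1) - x k‖ ^ 2
            ≤ ⟪F (x k) + η • H (x k)
              + (F (x k) + η • H (x k) - F (x (k - 1)) - η • H (x (k - 1))), z⟫
              + 1 / (2 * γ) * ‖z - x k‖ ^ 2) →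
        Gap F X (((K : ℝ) - 1)⁻¹ • ∑ k ∈ Finset.Icc 1 (K - 1), x (k + 1))
          ≤ ((C * DX * (DX * LF / (K : ℝ) + DX * LH / (K : ℝ) ^ ((5 : ℝ) / 4)
              + MF / (K : ℝ) ^ ((1 : ℝ) / 2) + MH / (K : ℝ) ^ ((3 : ℝ) / 4)
              + CH / (K : ℝ) ^ ((1 : ℝ) / 4)) : ℝ) : EReal) := by
  refine ⟨34, by norm_num, ?_⟩
  intro n X F H LF MF LH MH CH DX K η γ x _ hXc hXconv hDX hDX0 hLF hMF hLH hMH hmono _ hF hH hHb _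
    hK hη hden hγ hx₀ hx₁ hxX hstep
  have hη0 : 0 ≤ η := hη ▸ Real.rpow_nonneg K.cast_nonneg _
  have hγ0 : 0 < γ := hγ ▸ div_pos hDX0 hden
  have hγD : γ * (8 * DX * (LF + η * LH) + √(K * (MF ^ 2 + η ^ 2 * MH ^ 2))) = DX := by
    rw [hγ, div_mul_cancel₀ _ hden.ne']
  have hγL : 4 * γ * (LF + η * LH) ≤ 1 := by
    nlinarith [mul_nonneg hγ0.le (Real.sqrt_nonneg (K * (MF ^ 2 + η ^ 2 * MH ^ 2)))]
  have hx : IsROpExTrajectory F H X η γ (K - 1) x :=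
    ⟨hx₀, hx₁, hxX, fun k h₁ h₂ ↦ isMinOn_iff.2 (hstep k h₁ h₂)⟩
  refine iSup₂_le fun z hz ↦ EReal.coe_le_coe_iff.2 ?_
  have havg := hx.inner_average_sub_le (by omega) hXconv hXc.isBounded hLF hLH hη0 hγ0 hγL hmono
    hF hH hHb hz
  rw [Nat.cast_sub (by omega), Nat.cast_one, show Metric.diam X = 2 * DX by linarith] at havg
  exact havg.trans (ergodic_bound_le_rate (by exact_mod_cast hK) hη hDX0 hLF hMF hLH hMH
    ((norm_nonneg _).trans (hHb _ hx₁)) hγ0 hγD)
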